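/- arXiv:2208.04985 — 2 statements merged into one kernel-verified Lean document; each statement's English description precedes it below -/
import Mathlib

section
/- For every x ∈ [0,1): ∫_x^1 𝒢(ψ(θ)) f(θ) dθ > (1−F(x))·𝒢(x). (Equivalently, the ex-post fixed-price profit from serving types above x strictly exceeds the ex-ante at-will posted-price profit at price x; the difference equals ∫_x^1 ( ∫_{ψ(θ)}^{θ} (G(θ)−G(y)) dy ) f(θ) dθ.) -/
open MeasureTheory

/-- `F(x) = ∫₀^x f`, with the convention that it is `0` for `x ≤ 0`. -/
noncomputable def cdf (f : ℝ → ℝ) (x : ℝ) : ℝ := ∫ t in Set.Ioc (0:ℝ) x, f t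

/-- `𝒢(x) = ∫₀^x G(y) dy`, the left-hand integral of the cdf of `g` (`= 0` for `x ≤ 0`). -/
noncomputable def calG (g : ℝ → ℝ) (x : ℝ) : ℝ := ∫ y in Set.Ioc (0:ℝ) x, cdf g y

/-- `μ = ∫₀¹ ω g(ω) dω`, the mean cost. -/
noncomputable def muG (g : ℝ → ℝ) : ℝ := ∫ t in Set.Ioc (0:ℝ) 1, t * g t

/-- The virtual valuation `ψ(θ) = θ − (1 − F(θ))/f(θ)`. -/
noncomputable def psi (f : ℝ → ℝ) (θ : ℝ) : ℝ := θ - (1 - cdf f θ) / f θ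

/-!
Since `(θ - ψ θ) f θ = 1 - F θ`, the integrand `(∫_{ψ θ}^θ (G θ - G y) dy) f θ` equals
`(1 - F θ) G θ - 𝒢 θ f θ + 𝒢 (ψ θ) f θ`, and the first two terms form the derivative of
`(1 - F) 𝒢`, which vanishes at `1`; integrating over `[x, 1]` gives the identity. The strict
inequality follows because `ψ θ < θ` for `θ < 1` and `G` is strictly increasing on `[0, 1]`, so the
inner integral is positive.
-/

open Set intervalIntegral

lemma setIntegral_pos_of_ae_pos {α : Type*} [MeasurableSpace α] {μ : Measure α} {s : Set α}
    {φ : α → ℝ} (hs : MeasurableSet s) (hμs : 0 < μ s) (hφ : IntegrableOn φ s μ)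
    (hpos : ∀ᵐ t ∂μ.restrict s, 0 < φ t) : 0 < ∫ t in s, φ t ∂μ := by
  rwa [setIntegral_pos_iff_support_of_nonneg_ae (hpos.mono fun _ ht => ht.le) hφ,
    ← Measure.restrict_apply' hs,
    measure_congr (ae_eq_univ.mpr (ae_iff.mp (hpos.mono fun _ ht =>
      Function.mem_support.mpr ht.ne'))),
    Measure.restrict_apply_univ]

lemma cdf_of_nonpos (h : ℝ → ℝ) {x : ℝ} (hx : x ≤ 0) : cdf h x = 0 := by
  simp [cdf, Ioc_eq_empty (not_lt.mpr hx)]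

-- On `Iic b`, `cdf h` is a primitive of an integrable function on all of `ℝ`.
lemma cdf_eq_intervalIntegral_indicator (h : ℝ → ℝ) {x b : ℝ} (hx : x ≤ b) :
    cdf h x = ∫ t in 0..x, (Ioc 0 b).indicator h t := by
  rcases le_total 0 x with hx0 | hx0
  · rw [integral_of_le hx0, setIntegral_indicator measurableSet_Ioc, Ioc_inter_Ioc,
      max_self, min_eq_left hx, cdf]
  · rw [integral_of_ge hx0, setIntegral_indicator measurableSet_Ioc, Ioc_inter_Ioc,
      Ioc_eq_empty (by simp [hx0]), cdf_of_nonpos h hx0]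
    simp

section Cdf

variable {h : ℝ → ℝ} {b : ℝ}

lemma intervalIntegrable_indicator_Ioc (hh : IntegrableOn h (Ioc 0 b)) (p q : ℝ) :
    IntervalIntegrable ((Ioc 0 b).indicator h) volume p q :=
  ((integrable_indicator_iff measurableSet_Ioc).mpr hh).intervalIntegrable

lemma continuousOn_cdf (hh : IntegrableOn h (Ioc 0 b)) : ContinuousOn (cdf h) (Iic b) :=
  ((integrable_indicator_iff measurableSet_Ioc).mpr hh).continuous_primitive 0
    |>.continuousOn.congr fun _ hx => cdf_eq_intervalIntegral_indicator h hx

lemma cdf_sub_cdf (hh : IntegrableOn h (Ioc 0 b)) {p q : ℝ} (hp : p ≤ b) (hq : q ≤ b) :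
    cdf h q - cdf h p = ∫ t in p..q, (Ioc 0 b).indicator h t := by
  rw [cdf_eq_intervalIntegral_indicator h hp, cdf_eq_intervalIntegral_indicator h hq,
    integral_interval_sub_left (intervalIntegrable_indicator_Ioc hh _ _)
      (intervalIntegrable_indicator_Ioc hh _ _)]

lemma hasDerivAt_cdf (hh : IntegrableOn h (Ioc 0 b)) {x : ℝ} (hx : x ∈ Ioo 0 b)
    (hc : ContinuousAt h x) : HasDerivAt (cdf h) (h x) x := by
  have hloc : (Ioc 0 b).indicator h =ᶠ[nhds x] h :=
    Filter.eventually_of_mem (Ioc_mem_nhds hx.1 hx.2) fun _ hy => indicator_of_mem hy h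
  have hint := (integrable_indicator_iff measurableSet_Ioc).mpr hh
  have hprim := integral_hasDerivAt_right (intervalIntegrable_indicator_Ioc hh 0 x)
    hint.aestronglyMeasurable.stronglyMeasurableAtFilter (hc.congr hloc.symm)
  rw [hloc.eq_of_nhds] at hprim
  exact hprim.congr_of_eventuallyEq <| (eventually_le_nhds hx.2).mono
    fun _ hy => cdf_eq_intervalIntegral_indicator h hy

lemma cdf_lt_cdf (hh : IntegrableOn h (Ioc 0 b))
    (hpos : ∀ᵐ t ∂volume.restrict (Ioc 0 b), 0 < h t) {y θ : ℝ} (hyθ : y < θ) (hθ : 0 < θ)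
    (hθb : θ ≤ b) : cdf h y < cdf h θ := by
  have hsub : Ioc (max y 0) θ ⊆ Ioc 0 b := Ioc_subset_Ioc (le_max_right _ _) hθb
  rw [← sub_pos, cdf_sub_cdf hh (hyθ.le.trans hθb) hθb, integral_of_le hyθ.le,
    setIntegral_indicator measurableSet_Ioc, Ioc_inter_Ioc, min_eq_left hθb]
  refine setIntegral_pos_of_ae_pos measurableSet_Ioc ?_ (hh.mono_set hsub)
    (ae_restrict_of_ae_restrict_of_subset hsub hpos)
  rw [Real.volume_Ioc]
  exact ENNReal.ofReal_pos.mpr (sub_pos.mpr (max_lt hyθ hθ))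

lemma intervalIntegrable_cdf (hh : IntegrableOn h (Ioc 0 b)) {p q : ℝ} (hp : p ≤ b)
    (hq : q ≤ b) : IntervalIntegrable (cdf h) volume p q :=
  ((continuousOn_cdf hh).mono fun _ ht => ht.2.trans (max_le hp hq)).intervalIntegrable

lemma integrableOn_cdf (hh : IntegrableOn h (Ioc 0 b)) : IntegrableOn (cdf h) (Ioc 0 b) :=
  ((continuousOn_cdf hh).mono Icc_subset_Iic_self).integrableOn_Icc.mono_set Ioc_subset_Icc_self

lemma calG_eq_cdf_cdf (h : ℝ → ℝ) : calG h = cdf (cdf h) := rfl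

lemma continuousOn_calG (hh : IntegrableOn h (Ioc 0 b)) : ContinuousOn (calG h) (Iic b) :=
  continuousOn_cdf (integrableOn_cdf hh)

lemma calG_sub_calG (hh : IntegrableOn h (Ioc 0 b)) {p q : ℝ} (hp : p ≤ b) (hq : q ≤ b) :
    calG h q - calG h p = ∫ t in p..q, cdf h t := by
  rw [calG_eq_cdf_cdf, cdf_sub_cdf (integrableOn_cdf hh) hp hq]
  refine integral_congr fun t ht => ?_
  by_cases ht0 : 0 < t
  · exact indicator_of_mem (show t ∈ Ioc 0 b from ⟨ht0, ht.2.trans (max_le hp hq)⟩) _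
  · rw [indicator_of_notMem (fun hm => ht0 hm.1), cdf_of_nonpos h (not_lt.mp ht0)]

lemma integral_cdf_sub_cdf (hh : IntegrableOn h (Ioc 0 b)) {p q : ℝ} (hp : p ≤ b)
    (hq : q ≤ b) :
    ∫ y in p..q, (cdf h q - cdf h y) = (q - p) * cdf h q - (calG h q - calG h p) := by
  rw [integral_sub intervalIntegrable_const (intervalIntegrable_cdf hh hp hq),
    intervalIntegral.integral_const, smul_eq_mul, calG_sub_calG hh hp hq]

lemma integral_cdf_sub_cdf_pos (hh : IntegrableOn h (Ioc 0 b))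
    (hpos : ∀ᵐ t ∂volume.restrict (Ioc 0 b), 0 < h t) {p q : ℝ} (hpq : p < q) (hq : 0 < q)
    (hqb : q ≤ b) : 0 < ∫ y in p..q, (cdf h q - cdf h y) :=
  intervalIntegral_pos_of_pos_on
    (intervalIntegrable_const.sub (intervalIntegrable_cdf hh (hpq.le.trans hqb) hqb))
    (fun _ hy => sub_pos.mpr (cdf_lt_cdf hh hpos hy.2 hq hqb)) hpq

end Cdf

section VirtualValuation

variable {f : ℝ → ℝ}

lemma sub_psi_mul {θ : ℝ} (hfθ : f θ ≠ 0) : (θ - psi f θ) * f θ = 1 - cdf f θ := by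
  rw [psi, sub_sub_cancel, div_mul_cancel₀ _ hfθ]

lemma psi_lt_self {θ : ℝ} (hfθ : 0 < f θ) (hF : cdf f θ < 1) : psi f θ < θ :=
  sub_lt_self θ (div_pos (sub_pos.mpr hF) hfθ)

lemma cdf_lt_one (hf_cont : ContinuousOn f (Icc 0 1)) (hf_pos : ∀ t ∈ Icc (0:ℝ) 1, 0 < f t)
    (hf_one : cdf f 1 = 1) {θ : ℝ} (hθ : θ < 1) : cdf f θ < 1 :=
  hf_one ▸ cdf_lt_cdf (hf_cont.integrableOn_Icc.mono_set Ioc_subset_Icc_self)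
    (ae_restrict_of_forall_mem measurableSet_Ioc fun t ht => hf_pos t (Ioc_subset_Icc_self ht))
    hθ one_pos le_rfl

lemma psi_le_self (hf_cont : ContinuousOn f (Icc 0 1)) (hf_pos : ∀ t ∈ Icc (0:ℝ) 1, 0 < f t)
    (hf_one : cdf f 1 = 1) {θ : ℝ} (hθ : θ ∈ Icc 0 1) : psi f θ ≤ θ := by
  rcases hθ.2.lt_or_eq with hθ1 | rfl
  · exact (psi_lt_self (hf_pos θ hθ) (cdf_lt_one hf_cont hf_pos hf_one hθ1)).le
  · simp [psi, hf_one]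

lemma continuousOn_psi (hf_cont : ContinuousOn f (Icc 0 1))
    (hf_pos : ∀ t ∈ Icc (0:ℝ) 1, 0 < f t) : ContinuousOn (psi f) (Icc 0 1) :=
  continuousOn_id.sub <| (continuousOn_const.sub <|
    (continuousOn_cdf (hf_cont.integrableOn_Icc.mono_set Ioc_subset_Icc_self)).mono
      Icc_subset_Iic_self).div hf_cont fun t ht => (hf_pos t ht).ne'

end VirtualValuation

section Profit

variable {f g : ℝ → ℝ}

lemma hasDerivAt_one_sub_cdf_mul_calG (hf_cont : ContinuousOn f (Icc 0 1))
    (hg : IntegrableOn g (Ioc 0 1)) {t : ℝ} (ht : t ∈ Ioo 0 1) :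
    HasDerivAt (fun t => (1 - cdf f t) * calG g t)
      ((1 - cdf f t) * cdf g t - calG g t * f t) t := by
  have hF := hasDerivAt_cdf (hf_cont.integrableOn_Icc.mono_set Ioc_subset_Icc_self) ht
    (hf_cont.continuousAt (Icc_mem_nhds ht.1 ht.2))
  have hG : HasDerivAt (calG g) (cdf g t) t := hasDerivAt_cdf (integrableOn_cdf hg) ht
    ((continuousOn_cdf hg).continuousAt (Iic_mem_nhds ht.2))
  exact ((hF.const_sub 1).fun_mul hG).congr_deriv (by ring)

lemma continuousOn_one_sub_cdf_mul_cdf_sub_calG_mul (hf_cont : ContinuousOn f (Icc 0 1))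
    (hg : IntegrableOn g (Ioc 0 1)) :
    ContinuousOn (fun t => (1 - cdf f t) * cdf g t - calG g t * f t) (Icc 0 1) :=
  have hF := (continuousOn_cdf (hf_cont.integrableOn_Icc.mono_set Ioc_subset_Icc_self)).mono
    Icc_subset_Iic_self
  ((continuousOn_const.sub hF).mul ((continuousOn_cdf hg).mono Icc_subset_Iic_self)).sub
    (((continuousOn_calG hg).mono Icc_subset_Iic_self).mul hf_cont)

lemma continuousOn_calG_psi_mul (hf_cont : ContinuousOn f (Icc 0 1))
    (hf_pos : ∀ t ∈ Icc (0:ℝ) 1, 0 < f t) (hf_one : cdf f 1 = 1)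
    (hg : IntegrableOn g (Ioc 0 1)) :
    ContinuousOn (fun θ => calG g (psi f θ) * f θ) (Icc 0 1) :=
  ((continuousOn_calG hg).comp (continuousOn_psi hf_cont hf_pos)
    fun _ hθ => (psi_le_self hf_cont hf_pos hf_one hθ).trans hθ.2).mul hf_cont

lemma integral_one_sub_cdf_mul_cdf_sub_calG_mul (hf_cont : ContinuousOn f (Icc 0 1))
    (hf_one : cdf f 1 = 1) (hg : IntegrableOn g (Ioc 0 1)) {x : ℝ} (hx : x ∈ Icc 0 1) :
    ∫ t in x..1, ((1 - cdf f t) * cdf g t - calG g t * f t) = -((1 - cdf f x) * calG g x) := by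
  have hsub : Icc x 1 ⊆ Icc 0 1 := Icc_subset_Icc_left hx.1
  have hcont : ContinuousOn (fun t => (1 - cdf f t) * calG g t) (Icc x 1) :=
    ((continuousOn_const.sub (continuousOn_cdf (hf_cont.integrableOn_Icc.mono_set
      Ioc_subset_Icc_self))).mul (continuousOn_calG hg)).mono fun _ ht => ht.2
  rw [integral_eq_sub_of_hasDeriv_right_of_le hx.2 hcont
    (fun t ht => (hasDerivAt_one_sub_cdf_mul_calG hf_cont hg
      ⟨hx.1.trans_lt ht.1, ht.2⟩).hasDerivWithinAt)
    ((continuousOn_one_sub_cdf_mul_cdf_sub_calG_mul hf_cont hg).mono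
      (uIcc_of_le hx.2 ▸ hsub)).intervalIntegrable, hf_one]
  ring

lemma integral_cdf_sub_cdf_psi_mul (hf_cont : ContinuousOn f (Icc 0 1))
    (hf_pos : ∀ t ∈ Icc (0:ℝ) 1, 0 < f t) (hf_one : cdf f 1 = 1)
    (hg : IntegrableOn g (Ioc 0 1)) {θ : ℝ} (hθ : θ ∈ Icc 0 1) :
    (∫ y in psi f θ..θ, (cdf g θ - cdf g y)) * f θ =
      ((1 - cdf f θ) * cdf g θ - calG g θ * f θ) + calG g (psi f θ) * f θ := by
  rw [integral_cdf_sub_cdf hg ((psi_le_self hf_cont hf_pos hf_one hθ).trans hθ.2) hθ.2]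
  linear_combination cdf g θ * sub_psi_mul (hf_pos θ hθ).ne'

lemma integral_calG_psi_mul_sub (hf_cont : ContinuousOn f (Icc 0 1))
    (hf_pos : ∀ t ∈ Icc (0:ℝ) 1, 0 < f t) (hf_one : cdf f 1 = 1)
    (hg : IntegrableOn g (Ioc 0 1)) {x : ℝ} (hx : x ∈ Icc 0 1) :
    (∫ θ in x..1, calG g (psi f θ) * f θ) - (1 - cdf f x) * calG g x =
      ∫ θ in x..1, (∫ y in psi f θ..θ, (cdf g θ - cdf g y)) * f θ := by
  have hsub : uIcc x 1 ⊆ Icc 0 1 := uIcc_of_le hx.2 ▸ Icc_subset_Icc_left hx.1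
  rw [integral_congr fun θ hθ => integral_cdf_sub_cdf_psi_mul hf_cont hf_pos hf_one hg (hsub hθ),
    integral_add
      ((continuousOn_one_sub_cdf_mul_cdf_sub_calG_mul hf_cont hg).mono hsub).intervalIntegrable
      ((continuousOn_calG_psi_mul hf_cont hf_pos hf_one hg).mono hsub).intervalIntegrable,
    integral_one_sub_cdf_mul_cdf_sub_calG_mul hf_cont hf_one hg hx]
  ring

lemma integral_integral_cdf_sub_cdf_mul_pos (hf_cont : ContinuousOn f (Icc 0 1))
    (hf_pos : ∀ t ∈ Icc (0:ℝ) 1, 0 < f t) (hf_one : cdf f 1 = 1)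
    (hg : IntegrableOn g (Ioc 0 1)) (hg_pos : ∀ᵐ t ∂volume.restrict (Ioc 0 1), 0 < g t)
    {x : ℝ} (hx : x ∈ Ico 0 1) :
    0 < ∫ θ in x..1, (∫ y in psi f θ..θ, (cdf g θ - cdf g y)) * f θ := by
  have hsub : uIcc x 1 ⊆ Icc 0 1 := uIcc_of_le hx.2.le ▸ Icc_subset_Icc_left hx.1
  have hcont : ContinuousOn (fun θ => (∫ y in psi f θ..θ, (cdf g θ - cdf g y)) * f θ)
      (Icc 0 1) :=
    ((continuousOn_one_sub_cdf_mul_cdf_sub_calG_mul hf_cont hg).add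
      (continuousOn_calG_psi_mul hf_cont hf_pos hf_one hg)).congr
      fun θ hθ => integral_cdf_sub_cdf_psi_mul hf_cont hf_pos hf_one hg hθ
  refine intervalIntegral_pos_of_pos_on (hcont.mono hsub).intervalIntegrable
    (fun θ hθ => ?_) hx.2
  have hθ' : θ ∈ Icc 0 1 := ⟨hx.1.trans hθ.1.le, hθ.2.le⟩
  exact mul_pos (integral_cdf_sub_cdf_pos hg hg_pos
    (psi_lt_self (hf_pos θ hθ') (cdf_lt_one hf_cont hf_pos hf_one hθ.2))
    (hx.1.trans_lt hθ.1) hθ.2.le) (hf_pos θ hθ')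

end Profit

theorem stmt3_general
    (f g : ℝ → ℝ)
    (hg_int : IntegrableOn g (Set.Icc 0 1))
    (hg_ae : ∀ᵐ t, t ∈ Set.Icc (0:ℝ) 1 → 0 < g t)
    (hf_one : cdf f 1 = 1)
    (hf_cont : ContinuousOn f (Set.Icc 0 1))
    (hf_pos : ∀ t ∈ Set.Icc (0:ℝ) 1, 0 < f t) :
    ∀ x ∈ Set.Ico (0:ℝ) 1,
      (1 - cdf f x) * calG g x < (∫ θ in x..1, calG g (psi f θ) * f θ) ∧
      (∫ θ in x..1, calG g (psi f θ) * f θ) - (1 - cdf f x) * calG g x =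
        ∫ θ in x..1, (∫ y in (psi f θ)..θ, (cdf g θ - cdf g y)) * f θ := by
  intro x hx
  have hg : IntegrableOn g (Ioc 0 1) := hg_int.mono_set Ioc_subset_Icc_self
  have hg_pos : ∀ᵐ t ∂volume.restrict (Ioc 0 1), 0 < g t :=
    ae_restrict_of_ae_restrict_of_subset Ioc_subset_Icc_self
      ((ae_restrict_iff' measurableSet_Icc).mpr hg_ae)
  have hdiff := integral_calG_psi_mul_sub hf_cont hf_pos hf_one hg (Ico_subset_Icc_self hx)
  have hpos := integral_integral_cdf_sub_cdf_mul_pos hf_cont hf_pos hf_one hg hg_pos hx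
  exact ⟨by linarith, hdiff⟩

/-- for every `x ∈ [0,1)`, the ex-post fixed-price profit from serving types
above `x` strictly exceeds the ex-ante at-will posted-price profit at price `x`, and the
difference equals `∫_x^1 (∫_{ψ(θ)}^θ (G(θ) − G(y)) dy) f(θ) dθ`. -/
theorem stmt3
    (f g : ℝ → ℝ)
    (hf_int : IntegrableOn f (Set.Icc 0 1))
    (hg_int : IntegrableOn g (Set.Icc 0 1))
    (hf_ae : ∀ᵐ t, t ∈ Set.Icc (0:ℝ) 1 → 0 < f t)
    (hg_ae : ∀ᵐ t, t ∈ Set.Icc (0:ℝ) 1 → 0 < g t)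
    (hf_one : cdf f 1 = 1)
    (hg_one : cdf g 1 = 1)
    (hf_cont : ContinuousOn f (Set.Icc 0 1))
    (hf_pos : ∀ t ∈ Set.Icc (0:ℝ) 1, 0 < f t)
    (hpsi_mono : StrictMonoOn (psi f) (Set.Icc 0 1)) :
    ∀ x ∈ Set.Ico (0:ℝ) 1,
      (1 - cdf f x) * calG g x < (∫ θ in x..1, calG g (psi f θ) * f θ) ∧
      (∫ θ in x..1, calG g (psi f θ) * f θ) - (1 - cdf f x) * calG g x =
        ∫ θ in x..1, (∫ y in (psi f θ)..θ, (cdf g θ - cdf g y)) * f θ :=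
  stmt3_general f g hg_int hg_ae hf_one hf_cont hf_pos
end

section
/- For every p ∈ [0,1], (1−F(p))·𝒢(p) − (1−F(p))·(p−μ) = (1−F(p))·∫_p^1 (1−G(x)) dx, and this quantity is strictly positive for p ∈ [0,1). Consequently, max_{p∈[0,1]} (1−F(p))·𝒢(p) > max_{p∈[0,1]} (1−F(p))·(p−μ) (the optimal ex-ante at-will posted-price profit strictly exceeds the optimal ex-ante fixed-price profit). -/
open MeasureTheory

open Set intervalIntegral

/-! Integration by parts gives `μ = 1 - 𝒢(1)`, hence `𝒢(p) - (p - μ) = ∫_p^1 (1 - G)`, which is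
positive for `p < 1` since `G < 1` on `[p, 1)`. So a fixed-price maximiser `p < 1` is beaten by
the at-will profit at the same price, while at `p = 1` the fixed-price profit is `0` and the
at-will profit at `1/2` is already positive. -/

theorem intervalIntegral_pos_of_ae_pos {f : ℝ → ℝ} {a b : ℝ}
    (hfi : IntervalIntegrable f volume a b) (hpos : ∀ᵐ x, x ∈ Ioc a b → 0 < f x) (hab : a < b) :
    0 < ∫ x in a..b, f x := by
  have hnonneg : 0 ≤ᵐ[volume.restrict (uIoc a b)] f := by
    rw [uIoc_of_le hab.le, Filter.EventuallyLE, ae_restrict_iff' measurableSet_Ioc]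
    exact hpos.mono fun x hx hx' => (hx hx').le
  rw [integral_pos_iff_support_of_nonneg_ae' hnonneg hfi]
  refine ⟨hab, lt_of_lt_of_le ?_ (measure_mono_ae (s := Ioc a b) ?_)⟩
  · simpa using hab
  · filter_upwards [hpos] with x hx hx'
    exact ⟨(hx hx').ne', hx'⟩

theorem intervalIntegral.integral_id_mul_eq {g : ℝ → ℝ} {a b : ℝ}
    (hg : IntervalIntegrable g volume a b) :
    ∫ x in a..b, x * g x = b * (∫ t in a..b, g t) - ∫ x in a..b, ∫ t in a..x, g t := by
  have hG := hg.absolutelyContinuousOnInterval_intervalIntegral left_mem_uIcc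
  have hid : AbsolutelyContinuousOnInterval id a b := contDiffOn_id.absolutelyContinuousOnInterval
  have := hid.integral_mul_deriv_eq_deriv_mul hG
  simp only [deriv_id, one_mul, integral_same, mul_zero, sub_zero, id] at this
  rw [← this]
  refine integral_congr_ae ?_
  filter_upwards [hg.ae_hasDerivAt_integral] with x hx hx'
  rw [(hx (uIoc_subset_uIcc hx') a left_mem_uIcc).deriv]

theorem cdf_eq_intervalIntegral (f : ℝ → ℝ) {x : ℝ} (hx : 0 ≤ x) :
    cdf f x = ∫ t in 0..x, f t :=
  (integral_of_le hx).symm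

theorem calG_eq_intervalIntegral (g : ℝ → ℝ) {x : ℝ} (hx : 0 ≤ x) :
    calG g x = ∫ y in 0..x, cdf g y :=
  (integral_of_le hx).symm

@[simp]
theorem cdf_zero (f : ℝ → ℝ) : cdf f 0 = 0 := by
  simp [cdf]

section cdf

variable {f g : ℝ → ℝ}

theorem cdf_sub_cdf_s4 (hf : IntegrableOn f (Icc 0 1)) {a b : ℝ} (ha : a ∈ Icc (0:ℝ) 1)
    (hb : b ∈ Icc (0:ℝ) 1) : cdf f b - cdf f a = ∫ t in a..b, f t := by
  have h0 : (0:ℝ) ∈ Icc (0:ℝ) 1 := left_mem_Icc.2 zero_le_one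
  rw [cdf_eq_intervalIntegral f hb.1, cdf_eq_intervalIntegral f ha.1]
  exact integral_interval_sub_left (hf.mono_set (uIcc_subset_Icc h0 hb)).intervalIntegrable
    (hf.mono_set (uIcc_subset_Icc h0 ha)).intervalIntegrable

theorem cdf_strictMonoOn (hf : IntegrableOn f (Icc 0 1))
    (hpos : ∀ᵐ t, t ∈ Icc (0:ℝ) 1 → 0 < f t) : StrictMonoOn (cdf f) (Icc 0 1) := by
  intro a ha b hb hab
  rw [← sub_pos, cdf_sub_cdf_s4 hf ha hb]
  refine intervalIntegral_pos_of_ae_pos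
    (hf.mono_set (uIcc_subset_Icc ha hb)).intervalIntegrable ?_ hab
  filter_upwards [hpos] with t ht htab
  exact ht ⟨ha.1.trans htab.1.le, htab.2.trans hb.2⟩

theorem continuousOn_cdf_s4 (hf : IntegrableOn f (Icc 0 1)) : ContinuousOn (cdf f) (Icc 0 1) := by
  have h := continuousOn_primitive_interval (a := 0) (b := 1) (μ := volume)
    (by rwa [uIcc_of_le zero_le_one])
  rw [uIcc_of_le zero_le_one] at h
  exact h.congr fun x hx => cdf_eq_intervalIntegral f hx.1

theorem intervalIntegrable_cdf_s4 (hf : IntegrableOn f (Icc 0 1)) {a b : ℝ}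
    (ha : a ∈ Icc (0:ℝ) 1) (hb : b ∈ Icc (0:ℝ) 1) : IntervalIntegrable (cdf f) volume a b :=
  ((continuousOn_cdf_s4 hf).mono (uIcc_subset_Icc ha hb)).intervalIntegrable

theorem cdf_lt_one_s4 (hf : IntegrableOn f (Icc 0 1)) (hpos : ∀ᵐ t, t ∈ Icc (0:ℝ) 1 → 0 < f t)
    (hf_one : cdf f 1 = 1) {p : ℝ} (hp : p ∈ Ico (0:ℝ) 1) : cdf f p < 1 :=
  hf_one ▸ cdf_strictMonoOn hf hpos (Ico_subset_Icc_self hp) (right_mem_Icc.2 zero_le_one) hp.2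

theorem muG_eq_one_sub_calG (hg : IntegrableOn g (Icc 0 1)) (hg_one : cdf g 1 = 1) :
    muG g = 1 - calG g 1 := by
  have hcalG : calG g 1 = ∫ x in 0..1, ∫ t in 0..x, g t := by
    rw [calG_eq_intervalIntegral g zero_le_one]
    refine integral_congr fun x hx => cdf_eq_intervalIntegral g ?_
    simpa using hx.1
  rw [muG, ← integral_of_le zero_le_one,
    integral_id_mul_eq ((intervalIntegrable_iff_integrableOn_Icc_of_le zero_le_one).2 hg),
    ← hcalG, ← cdf_eq_intervalIntegral g zero_le_one, hg_one, one_mul]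

theorem calG_sub_eq_integral_one_sub_cdf (hg : IntegrableOn g (Icc 0 1)) (hg_one : cdf g 1 = 1)
    {p : ℝ} (hp : p ∈ Icc (0:ℝ) 1) :
    calG g p - (p - muG g) = ∫ x in p..1, (1 - cdf g x) := by
  have h0 : (0:ℝ) ∈ Icc (0:ℝ) 1 := left_mem_Icc.2 zero_le_one
  have h1 : (1:ℝ) ∈ Icc (0:ℝ) 1 := right_mem_Icc.2 zero_le_one
  rw [integral_sub intervalIntegrable_const (intervalIntegrable_cdf_s4 hg hp h1),
    intervalIntegral.integral_const, smul_eq_mul, mul_one,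
    ← integral_interval_sub_left (intervalIntegrable_cdf_s4 hg h0 h1)
      (intervalIntegrable_cdf_s4 hg h0 hp),
    ← calG_eq_intervalIntegral g zero_le_one, ← calG_eq_intervalIntegral g hp.1,
    muG_eq_one_sub_calG hg hg_one]
  ring

theorem integral_one_sub_cdf_pos (hg : IntegrableOn g (Icc 0 1))
    (hpos : ∀ᵐ t, t ∈ Icc (0:ℝ) 1 → 0 < g t) (hg_one : cdf g 1 = 1) {p : ℝ}
    (hp : p ∈ Ico (0:ℝ) 1) : 0 < ∫ x in p..1, (1 - cdf g x) :=
  intervalIntegral_pos_of_pos_on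
    (intervalIntegrable_const.sub
      (intervalIntegrable_cdf_s4 hg (Ico_subset_Icc_self hp) (right_mem_Icc.2 zero_le_one)))
    (fun _ hx => sub_pos.2 (cdf_lt_one_s4 hg hpos hg_one ⟨hp.1.trans hx.1.le, hx.2⟩)) hp.2

theorem calG_pos (hg : IntegrableOn g (Icc 0 1)) (hpos : ∀ᵐ t, t ∈ Icc (0:ℝ) 1 → 0 < g t)
    {p : ℝ} (hp : p ∈ Ioc (0:ℝ) 1) : 0 < calG g p := by
  have h0 : (0:ℝ) ∈ Icc (0:ℝ) 1 := left_mem_Icc.2 zero_le_one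
  rw [calG_eq_intervalIntegral g hp.1.le]
  refine intervalIntegral_pos_of_pos_on
    (intervalIntegrable_cdf_s4 hg h0 (Ioc_subset_Icc_self hp)) (fun x hx => ?_) hp.1
  simpa using cdf_strictMonoOn hg hpos h0 ⟨hx.1.le, hx.2.le.trans hp.2⟩ hx.1

end cdf

/-- for every `p ∈ [0,1]`,
`(1−F(p))·𝒢(p) − (1−F(p))·(p−μ) = (1−F(p))·∫_p^1 (1−G(x)) dx`, strictly positive for
`p ∈ [0,1)`; consequently the optimal ex-ante at-will posted-price profit strictly exceeds
the optimal ex-ante fixed-price profit. -/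
theorem stmt4
    (f g : ℝ → ℝ)
    (hf_int : IntegrableOn f (Set.Icc 0 1))
    (hg_int : IntegrableOn g (Set.Icc 0 1))
    (hf_ae : ∀ᵐ t, t ∈ Set.Icc (0:ℝ) 1 → 0 < f t)
    (hg_ae : ∀ᵐ t, t ∈ Set.Icc (0:ℝ) 1 → 0 < g t)
    (hf_one : cdf f 1 = 1)
    (hg_one : cdf g 1 = 1) :
    (∀ p ∈ Set.Icc (0:ℝ) 1,
      (1 - cdf f p) * calG g p - (1 - cdf f p) * (p - muG g) =
        (1 - cdf f p) * ∫ x in p..1, (1 - cdf g x)) ∧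
    (∀ p ∈ Set.Ico (0:ℝ) 1,
      0 < (1 - cdf f p) * calG g p - (1 - cdf f p) * (p - muG g)) ∧
    ∀ piEAO piEAFP : ℝ,
      IsGreatest ((fun p => (1 - cdf f p) * calG g p) '' Set.Icc (0:ℝ) 1) piEAO →
      IsGreatest ((fun p => (1 - cdf f p) * (p - muG g)) '' Set.Icc (0:ℝ) 1) piEAFP →
      piEAFP < piEAO := by
  have hgap : ∀ p ∈ Icc (0:ℝ) 1,
      (1 - cdf f p) * calG g p - (1 - cdf f p) * (p - muG g) =
        (1 - cdf f p) * ∫ x in p..1, (1 - cdf g x) := fun p hp => by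
    rw [← mul_sub, calG_sub_eq_integral_one_sub_cdf hg_int hg_one hp]
  have hgap_pos : ∀ p ∈ Ico (0:ℝ) 1,
      0 < (1 - cdf f p) * calG g p - (1 - cdf f p) * (p - muG g) := fun p hp => by
    rw [hgap p (Ico_subset_Icc_self hp)]
    exact mul_pos (sub_pos.2 (cdf_lt_one_s4 hf_int hf_ae hf_one hp))
      (integral_one_sub_cdf_pos hg_int hg_ae hg_one hp)
  refine ⟨hgap, hgap_pos, fun piEAO piEAFP hEAO hEAFP => ?_⟩
  obtain ⟨⟨p, hp, rfl⟩, -⟩ := hEAFP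
  rcases hp.2.lt_or_eq with hp1 | rfl
  · exact (sub_pos.1 (hgap_pos p ⟨hp.1, hp1⟩)).trans_le (hEAO.2 ⟨p, hp, rfl⟩)
  · have hhalf : (1/2 : ℝ) ∈ Ico (0:ℝ) 1 := by norm_num
    calc (1 - cdf f 1) * (1 - muG g) = 0 := by rw [hf_one, sub_self, zero_mul]
      _ < (1 - cdf f (1/2)) * calG g (1/2) :=
        mul_pos (sub_pos.2 (cdf_lt_one_s4 hf_int hf_ae hf_one hhalf))
          (calG_pos hg_int hg_ae (by norm_num))
      _ ≤ piEAO := hEAO.2 ⟨1/2, Ico_subset_Icc_self hhalf, rfl⟩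
end
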